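/- arXiv:math/0205056 — 3 statements merged into one kernel-verified Lean document; each statement's English description precedes it below -/
import Mathlib

section
/- Suppose (τ_1,...,τ_w) is a sequence of transpositions in S_d such that each τ_i lies in one of the pairwise commuting subgroups S_{A_1},...,S_{A_r} for a partition A_1,...,A_r of {1,...,d}. Then by applying braid moves σ_i (replacing (τ_i,τ_{i+1}) by (τ_{i+1}, τ_{i+1}τ_iτ_{i+1})), the sequence can be transformed into one where, for some integers w_1,...,w_r summing to w, the first w_1 entries lie in S_{A_1}, the next w_2 lie in S_{A_2}, and so on. -/
/-!
Two transpositions lying in different blocks have disjoint supports, so they commute; since a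
transposition is an involution, the braid move on such an adjacent pair, `(a, b) ↦ (b, b a b)`,
is just the swap `(a, b) ↦ (b, a)`. Hence the insertion sort of the sequence by block index can
be carried out with braid moves alone.
-/

/-- A single braid move: replace an adjacent pair `(a, b)` by `(b, b * a * b)`. -/
def BraidMove {G : Type*} [Group G] (l l' : List G) : Prop :=
  ∃ (l1 l2 : List G) (a b : G), l = l1 ++ a :: b :: l2 ∧ l' = l1 ++ b :: (b * a * b) :: l2

section BraidMove

variable {G : Type*} [Group G]

theorem BraidMove.cons (x : G) {l l' : List G} (h : BraidMove l l') :
    BraidMove (x :: l) (x :: l') := by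
  obtain ⟨l1, l2, a, b, rfl, rfl⟩ := h
  exact ⟨x :: l1, l2, a, b, rfl, rfl⟩

theorem reflTransGen_braidMove_cons (x : G) {l l' : List G}
    (h : Relation.ReflTransGen BraidMove l l') :
    Relation.ReflTransGen BraidMove (x :: l) (x :: l') :=
  h.lift (x :: ·) fun _ _ => BraidMove.cons x

theorem braidMove_swap_of_mul_mul_eq {a b : G} (hab : b * a * b = a) (l : List G) :
    BraidMove (a :: b :: l) (b :: a :: l) :=
  ⟨[], l, a, b, rfl, by rw [hab]; rfl⟩

variable {α : Type*} (f : α → G) (r : α → α → Prop) [DecidableRel r]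

theorem reflTransGen_braidMove_map_orderedInsert
    (hf : ∀ x y, ¬ r x y → f y * f x * f y = f x) (x : α) (l : List α) :
    Relation.ReflTransGen BraidMove ((x :: l).map f) ((l.orderedInsert r x).map f) := by
  induction l with
  | nil => exact .refl
  | cons y l ih =>
    by_cases hxy : r x y
    · rw [List.orderedInsert_cons_of_le r l hxy]
    · rw [List.orderedInsert_of_not_le r l hxy]
      exact .head (braidMove_swap_of_mul_mul_eq (hf x y hxy) _)
        (reflTransGen_braidMove_cons (f y) ih)

theorem reflTransGen_braidMove_map_insertionSort
    (hf : ∀ x y, ¬ r x y → f y * f x * f y = f x) (l : List α) :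
    Relation.ReflTransGen BraidMove (l.map f) ((l.insertionSort r).map f) := by
  induction l with
  | nil => exact .refl
  | cons x l ih =>
    exact (reflTransGen_braidMove_cons (f x) ih).trans
      (reflTransGen_braidMove_map_orderedInsert f r hf x _)

end BraidMove

theorem Equiv.Perm.IsSwap.mul_self_eq_one {α : Type*} [DecidableEq α] {σ : Equiv.Perm α}
    (h : σ.IsSwap) : σ * σ = 1 := by
  obtain ⟨x, y, -, rfl⟩ := h
  exact Equiv.swap_mul_self x y

theorem Equiv.Perm.IsSwap.mul_mul_eq_of_disjoint {α : Type*} [DecidableEq α]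
    {σ τ : Equiv.Perm α} (hτ : τ.IsSwap) (h : σ.Disjoint τ) : τ * σ * τ = σ := by
  rw [← h.commute.eq, mul_assoc, hτ.mul_self_eq_one, mul_one]

theorem standard_position_general (d r w : ℕ) (A : Fin r → Finset (Fin d))
    (hdisj : ∀ m n, m ≠ n → Disjoint (A m) (A n))
    (τ : Fin w → Equiv.Perm (Fin d))
    (hswap : ∀ i, (τ i).IsSwap)
    (hblk : ∀ i, ∃ m, (τ i).support ⊆ A m) :
    ∃ (τ' : Fin w → Equiv.Perm (Fin d)) (b : Fin w → Fin r),
      Relation.ReflTransGen BraidMove (List.ofFn τ) (List.ofFn τ') ∧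
      Monotone b ∧ ∀ i, (τ' i).support ⊆ A (b i) := by
  choose blk hblk using hblk
  have hconj : ∀ i j, ¬ blk i ≤ blk j → τ j * τ i * τ j = τ i := fun i j hij =>
    (hswap j).mul_mul_eq_of_disjoint <| Equiv.Perm.disjoint_iff_disjoint_support.2 <|
      (hdisj _ _ (ne_of_not_le hij)).mono (hblk i) (hblk j)
  set L := (List.finRange w).insertionSort (fun i j => blk i ≤ blk j)
  have hlen : L.length = w := by simp [L]
  refine ⟨fun k => τ L[k.1], fun k => blk L[k.1], ?_, ?_, fun k => hblk _⟩
  · have hsorted : List.ofFn (fun k : Fin w => τ L[k.1]) = L.map τ :=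
      List.ext_getElem (by simp [hlen]) fun _ _ _ => by simp
    rw [hsorted, List.ofFn_eq_map]
    exact reflTransGen_braidMove_map_insertionSort τ _ hconj _
  · have : Std.Total fun i j => blk i ≤ blk j := ⟨fun i j => le_total (blk i) (blk j)⟩
    have : IsTrans (Fin w) fun i j => blk i ≤ blk j := ⟨fun _ _ _ => le_trans⟩
    have hL : L.Pairwise fun i j => blk i ≤ blk j := List.pairwise_insertionSort _ _
    exact monotone_iff_forall_lt.2 fun k l hkl =>
      List.pairwise_iff_getElem.1 hL k l (by simp [hlen]) (by simp [hlen]) hkl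

/-- A sequence of transpositions, each lying in one of the factors `S_{A_m}` for a
partition `A_1,...,A_r`, can be brought into standard position by braid moves:
the entries in `S_{A_1}` come first, then those in `S_{A_2}`, and so on. -/
theorem standard_position (d r w : ℕ) (A : Fin r → Finset (Fin d))
    (hdisj : ∀ m n, m ≠ n → Disjoint (A m) (A n))
    (hcover : Finset.univ.biUnion A = Finset.univ)
    (τ : Fin w → Equiv.Perm (Fin d))
    (hswap : ∀ i, (τ i).IsSwap)
    (hblk : ∀ i, ∃ m, (τ i).support ⊆ A m) :
    ∃ (τ' : Fin w → Equiv.Perm (Fin d)) (b : Fin w → Fin r),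
      Relation.ReflTransGen BraidMove (List.ofFn τ) (List.ofFn τ') ∧
      Monotone b ∧ ∀ i, (τ' i).support ⊆ A (b i) :=
  standard_position_general d r w A hdisj τ hswap hblk
end

section
/- Let g ∈ S_n be a permutation with cycle type λ = (λ_1,...,λ_s) (including fixed points as cycles of length 1). Then g can be written as a product of exactly Σ_k (λ_k − 1) + 2(s−1) = n + s − 2 transpositions which together generate all of S_n. -/
/-- The number of cycles of a permutation, counting fixed points as 1-cycles. -/
def numCycles {n : ℕ} (g : Equiv.Perm (Fin n)) : ℕ :=
  n - g.cycleType.sum + Multiset.card g.cycleType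

/-!
Writing each nontrivial cycle `(a₁ … a_λ)` as `(a₁ a₂)(a₂ a₃)⋯(a_{λ-1} a_λ)` factors `g` into
`n - s` transpositions. Pick one point in each of the `s` cycles (fixed points included) and a
base point `r₀` among them; appending `(r₀ r)(r₀ r)` for each of the other `s - 1` chosen points
leaves the product unchanged. The generated subgroup contains `g`, so each cycle of `g` lies in
one of its orbits, and the appended transpositions join all these orbits to that of `r₀`. A
subgroup containing every `(r₀ a)` is the whole symmetric group.
-/

open Finset Subgroup

namespace Equiv.Perm

variable {α : Type*} [DecidableEq α]

theorem isSwap_of_mem_zipWith_swap {l : List α} (hl : l.Nodup) {τ : Perm α}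
    (hτ : τ ∈ List.zipWith swap l l.tail) : τ.IsSwap := by
  induction l with
  | nil => simp at hτ
  | cons a l ih =>
    cases l with
    | nil => simp at hτ
    | cons b l =>
      rcases List.mem_cons.mp hτ with rfl | hτ
      · exact ⟨a, b, fun hab => (List.nodup_cons.mp hl).1 (hab ▸ List.mem_cons_self), rfl⟩
      · exact ih hl.of_cons hτ

theorem subgroup_eq_top_of_forall_swap_mem [Finite α] {H : Subgroup (Perm α)} (x : α)
    (h : ∀ y, swap x y ∈ H) : H = ⊤ := by
  rw [eq_top_iff, ← closure_isSwap, closure_le]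
  rintro _ ⟨a, b, -, rfl⟩
  exact SubmonoidClass.swap_mem_trans H (swap_comm a x ▸ h a) (h b)

theorem prod_flatMap_swap_swap (x : α) (l : List α) :
    (l.flatMap fun y => [swap x y, swap x y]).prod = 1 := by
  induction l with
  | nil => rfl
  | cons y l ih => simp [List.flatMap_cons, ih]

variable [Fintype α]

theorem IsCycle.exists_swap_factorization {σ : Perm α} (hσ : σ.IsCycle) :
    ∃ l : List (Perm α), (∀ τ ∈ l, τ.IsSwap) ∧ l.prod = σ ∧ l.length + 1 = #σ.support := by
  obtain ⟨x, hx⟩ := hσ.nonempty_support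
  have hcycleOf : σ.cycleOf x = σ := hσ.cycleOf_eq (mem_support.mp hx)
  refine ⟨List.zipWith swap (σ.toList x) (σ.toList x).tail,
    fun τ hτ => isSwap_of_mem_zipWith_swap (nodup_toList σ x) hτ, ?_, ?_⟩
  · rw [← List.formPerm, formPerm_toList, hcycleOf]
  · have := length_toList_pos_of_mem_support σ x hx
    simp only [List.length_zipWith, List.length_tail, length_toList, hcycleOf] at this ⊢
    omega

theorem exists_swap_factorization (σ : Perm α) :
    ∃ l : List (Perm α), (∀ τ ∈ l, τ.IsSwap) ∧ l.prod = σ ∧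
      l.length + Multiset.card σ.cycleType = #σ.support := by
  induction σ using cycle_induction_on with
  | base_one => exact ⟨[], by simp⟩
  | base_cycles σ hσ =>
    simpa [hσ.cycleType] using hσ.exists_swap_factorization
  | induction_disjoint σ τ hστ _ hσ hτ =>
    obtain ⟨lσ, hσswap, hσprod, hσlen⟩ := hσ
    obtain ⟨lτ, hτswap, hτprod, hτlen⟩ := hτ
    refine ⟨lσ ++ lτ, ?_, by rw [List.prod_append, hσprod, hτprod], ?_⟩
    · simpa [or_imp, forall_and] using ⟨hσswap, hτswap⟩
    · rw [hστ.cycleType_mul, hστ.card_support_mul, List.length_append, Multiset.card_add]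
      omega

theorem exists_sameCycle_representatives (g : Perm α) :
    ∃ R : Finset α, #R + #g.support = Fintype.card α + Multiset.card g.cycleType ∧
      ∀ a, ∃ r ∈ R, g.SameCycle r a := by
  have hsurj : Set.SurjOn g.cycleOf g.support g.cycleFactorsFinset := fun c hc => by
    obtain ⟨x, hx⟩ := (mem_cycleFactorsFinset_iff.mp hc).1.nonempty_support
    exact ⟨x, mem_cycleFactorsFinset_support_le hc hx, (cycle_is_cycleOf hx hc).symm⟩
  obtain ⟨u, hu, hinj, himage⟩ := exists_subset_injOn_image_eq_of_surjOn _ _ hsurj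
  replace hu : u ⊆ g.support := mod_cast hu
  refine ⟨u ∪ g.supportᶜ, ?_, fun a => ?_⟩
  · have hcard : #u = Multiset.card g.cycleType := by
      rw [← card_image_of_injOn hinj, himage, cycleType_def, Multiset.card_map, card_val]
    rw [card_union_of_disjoint (disjoint_compl_right.mono_left hu), card_compl, hcard,
      add_assoc, Nat.sub_add_cancel (card_le_univ _), add_comm]
  · by_cases ha : a ∈ g.support
    · have : g.cycleOf a ∈ u.image g.cycleOf :=
        himage ▸ cycleOf_mem_cycleFactorsFinset_iff.mpr ha
      obtain ⟨r, hr, hra⟩ := mem_image.mp this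
      refine ⟨r, mem_union_left _ hr, (mem_support_cycleOf_iff.mp ?_).1⟩
      rw [hra, mem_support_cycleOf_iff]
      exact ⟨SameCycle.refl g a, ha⟩
    · exact ⟨a, mem_union_right _ (mem_compl.mpr ha), SameCycle.refl g a⟩

theorem exists_generating_swap_factorization [Nonempty α] (g : Perm α) :
    ∃ l : List (Perm α), (∀ τ ∈ l, τ.IsSwap) ∧ l.prod = g ∧ closure {τ | τ ∈ l} = ⊤ ∧
      l.length + #g.support + 2 = 2 * Fintype.card α + Multiset.card g.cycleType := by
  obtain ⟨lg, hswap, hprod, hlen⟩ := g.exists_swap_factorization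
  obtain ⟨R, hRcard, hR⟩ := g.exists_sameCycle_representatives
  obtain ⟨r₀, hr₀⟩ : R.Nonempty :=
    let ⟨r, hr, _⟩ := hR (Classical.arbitrary α); ⟨r, hr⟩
  set links := (R.erase r₀).toList.flatMap fun r => [swap r₀ r, swap r₀ r]
  set H := closure {τ | τ ∈ lg ++ links}
  have hswaps : ∀ τ ∈ lg ++ links, τ.IsSwap := by
    simp only [List.mem_append, links, List.mem_flatMap, mem_toList, List.mem_cons,
      List.not_mem_nil, or_false, or_self]
    rintro τ (hτ | ⟨r, hr, rfl⟩)
    · exact hswap τ hτ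
    · exact ⟨r₀, r, (ne_of_mem_erase hr).symm, rfl⟩
  refine ⟨lg ++ links, hswaps, by rw [List.prod_append, hprod, prod_flatMap_swap_swap, mul_one],
    ?_, ?_⟩
  · have hg : g ∈ H := hprod ▸ list_prod_mem fun τ hτ => subset_closure (List.mem_append_left _ hτ)
    have hlink : ∀ r ∈ R, swap r₀ r ∈ H := fun r hr => by
      rcases eq_or_ne r r₀ with rfl | hne
      · rw [swap_self]; exact H.one_mem
      · exact subset_closure (List.mem_append_right _ (List.mem_flatMap.mpr
          ⟨r, mem_toList.mpr (mem_erase.mpr ⟨hne, hr⟩), List.mem_cons_self⟩))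
    refine subgroup_eq_top_of_forall_swap_mem r₀ fun a => ?_
    obtain ⟨r, hr, k, rfl⟩ := hR a
    refine SubmonoidClass.swap_mem_trans H (hlink r hr) ?_
    rw [swap_comm]
    exact (swap_mem_closure_isSwap hswaps).mpr (MulAction.mem_orbit r (⟨g ^ k, zpow_mem hg k⟩ : H))
  · have hR₀ := card_pos.mpr ⟨r₀, hr₀⟩
    have hlinks : links.length = 2 * (#R - 1) := by
      simp [links, List.length_flatMap, card_erase_of_mem hr₀, mul_comm]
    rw [List.length_append, hlinks]
    omega

end Equiv.Perm

/-- A permutation `g ∈ S_n` with `s` cycles (including fixed points) can be written as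
a product of exactly `n + s - 2` transpositions which together generate all of `S_n`. -/
theorem factorization_generating_of_length_n_add_s_sub_two (n : ℕ) (hn : 2 ≤ n)
    (g : Equiv.Perm (Fin n)) (s : ℕ) (hs : s = numCycles g) :
    ∃ l : List (Equiv.Perm (Fin n)),
      (∀ x ∈ l, x.IsSwap) ∧ l.prod = g ∧
      Subgroup.closure {x | x ∈ l} = ⊤ ∧ l.length = n + s - 2 := by
  have : Nonempty (Fin n) := ⟨⟨0, by omega⟩⟩
  obtain ⟨l, hswap, hprod, hclosure, hlen⟩ := g.exists_generating_swap_factorization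
  refine ⟨l, hswap, hprod, hclosure, ?_⟩
  have hsupport := card_le_univ g.support
  rw [Fintype.card_fin] at hlen hsupport
  rw [hs, numCycles, Equiv.Perm.sum_cycleType]
  omega
end

section
/- Let g ∈ S_n with n ≥ 2 and let w ≥ 2n be an integer with w ≡ (number of transpositions in any factorization of g) mod 2, i.e. (−1)^w = sgn(g). Then there exists a sequence of w transpositions (τ_1,...,τ_w) in S_n whose product is g, whose entries generate S_n, and whose last two entries are equal (τ_{w−1} = τ_w). -/
/-!
Multiplying `g` on the right by the inverse of the product of the adjacent transpositions
`(i i+1)`, `i < n - 1`, and factoring the result into at most `n` transpositions writes `g` as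
a product of fewer than `2n` transpositions that already generate `S_n`. The sign condition makes
the missing length even, and it is filled by repeating any transposition `τ`, since `τ² = 1`.
-/

open Equiv Finset

namespace Equiv.Perm

variable {α : Type*} [DecidableEq α]

theorem exists_isSwap_list_prod_eq_length_le_card_support [Fintype α] (g : Perm α) :
    ∃ l : List (Perm α), (∀ x ∈ l, x.IsSwap) ∧ l.prod = g ∧ l.length ≤ #g.support := by
  induction h : #g.support using Nat.strong_induction_on generalizing g with
  | _ k ih =>
    obtain rfl | hg := eq_or_ne g 1
    · exact ⟨[], by simp, rfl, Nat.zero_le _⟩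
    obtain ⟨x, hx⟩ : ∃ x, g x ≠ x := not_forall.mp fun h ↦ hg (Equiv.ext h)
    obtain ⟨l, hl, hprod, hlen⟩ :=
      ih _ (h ▸ card_support_swap_mul hx) (swap x (g x) * g) rfl
    refine ⟨swap x (g x) :: l, ?_, ?_, ?_⟩
    · exact List.forall_mem_cons.mpr ⟨⟨x, g x, hx.symm, rfl⟩, hl⟩
    · rw [List.prod_cons, hprod, ← mul_assoc, swap_mul_self, one_mul]
    · have := card_support_swap_mul hx
      simp only [List.length_cons]
      omega

theorem even_sub_length_of_sign_prod_eq [Fintype α] {l : List (Perm α)}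
    (hl : ∀ x ∈ l, x.IsSwap) {w : ℕ} (hw : l.length ≤ w) (hsign : sign l.prod = (-1) ^ w) :
    Even (w - l.length) := by
  rw [sign_prod_list_swap hl, ← Nat.sub_add_cancel hw, pow_add, right_eq_mul] at hsign
  exact (neg_one_pow_eq_one_iff_even (by decide)).mp hsign

theorem exists_isSwap_list_append_pair_prod_eq [Fintype α] {l : List (Perm α)}
    (hl : ∀ x ∈ l, x.IsSwap) {τ : Perm α} (hτ : τ.IsSwap) {w : ℕ} (hw : l.length < w)
    (hsign : sign l.prod = (-1) ^ w) :
    ∃ l₀ : List (Perm α), (l₀ ++ [τ, τ]).length = w ∧ (∀ x ∈ l₀ ++ [τ, τ], x.IsSwap) ∧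
      (l₀ ++ [τ, τ]).prod = l.prod ∧ ∀ x ∈ l, x ∈ l₀ ++ [τ, τ] := by
  obtain ⟨k, hk⟩ := even_sub_length_of_sign_prod_eq hl hw.le hsign
  have hττ : τ * τ = 1 := by
    obtain ⟨a, b, -, rfl⟩ := hτ
    exact swap_mul_self a b
  refine ⟨l ++ List.replicate (k + k - 2) τ, ?_, ?_, ?_, ?_⟩
  · simp only [List.length_append, List.length_replicate, List.length_cons, List.length_nil]
    omega
  · simp only [List.mem_append, List.mem_replicate, List.mem_cons, List.not_mem_nil,
      or_false]
    rintro x ((hx | ⟨-, rfl⟩) | rfl | rfl)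
    exacts [hl x hx, hτ, hτ, hτ]
  · obtain ⟨j, hj⟩ : ∃ j, k + k - 2 = 2 * j := ⟨k - 1, by omega⟩
    simp [hj, pow_mul, sq, hττ]
  · exact fun x hx ↦ List.mem_append_left _ (List.mem_append_left _ hx)

end Equiv.Perm

open Equiv.Perm

def adjacentSwaps (m : ℕ) : List (Perm (Fin (m + 1))) :=
  List.ofFn fun i : Fin m ↦ swap i.castSucc i.succ

theorem length_adjacentSwaps (m : ℕ) : (adjacentSwaps m).length = m :=
  List.length_ofFn

theorem isSwap_of_mem_adjacentSwaps {m : ℕ} {x : Perm (Fin (m + 1))}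
    (hx : x ∈ adjacentSwaps m) : x.IsSwap := by
  obtain ⟨i, rfl⟩ := List.mem_ofFn.mp hx
  exact ⟨i.castSucc, i.succ, Fin.castSucc_lt_succ.ne, rfl⟩

theorem closure_adjacentSwaps (m : ℕ) : Subgroup.closure {x | x ∈ adjacentSwaps m} = ⊤ := by
  refine Subgroup.closure_eq_top_of_mclosure_eq_top (top_unique ?_)
  rw [← mclosure_swap_castSucc_succ m]
  exact Submonoid.closure_mono fun _ ⟨i, hi⟩ ↦ List.mem_ofFn.mpr ⟨i, hi⟩

/-- For `g ∈ S_n`, `n ≥ 2`, and `w ≥ 2n` with `(-1)^w = sgn(g)`, there is a length-`w`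
sequence of transpositions with product `g`, generating `S_n`, whose last two entries
are equal. -/
theorem factorization_with_repeated_last_pair (n : ℕ) (hn : 2 ≤ n)
    (g : Equiv.Perm (Fin n)) (w : ℕ) (hw : 2 * n ≤ w)
    (hsgn : Equiv.Perm.sign g = (-1 : ℤˣ) ^ w) :
    ∃ (l0 : List (Equiv.Perm (Fin n))) (τ : Equiv.Perm (Fin n)),
      (l0 ++ [τ, τ]).length = w ∧
      (∀ x ∈ l0 ++ [τ, τ], x.IsSwap) ∧
      (l0 ++ [τ, τ]).prod = g ∧
      Subgroup.closure {x | x ∈ l0 ++ [τ, τ]} = ⊤ := by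
  obtain ⟨m, rfl⟩ : ∃ m, n = m + 2 := ⟨n - 2, by omega⟩
  set A := adjacentSwaps (m + 1)
  have hA : A.length = m + 1 := length_adjacentSwaps _
  obtain ⟨l, hl, hprod, hlen⟩ := exists_isSwap_list_prod_eq_length_le_card_support (g * A.prod⁻¹)
  have hswap : ∀ x ∈ l ++ A, x.IsSwap := by
    simpa only [List.mem_append, or_imp, forall_and] using
      ⟨hl, fun _ ↦ isSwap_of_mem_adjacentSwaps⟩
  have hprod' : (l ++ A).prod = g := by simp [hprod]
  have hlen' : (l ++ A).length < w := by
    have := hlen.trans (card_le_univ _)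
    simp only [List.length_append, hA, Fintype.card_fin] at this ⊢
    omega
  obtain ⟨l₀, hlen₀, hswap₀, hprod₀, hsub⟩ := exists_isSwap_list_append_pair_prod_eq hswap
    ⟨0, 1, Fin.zero_ne_one, rfl⟩ hlen' (hprod' ▸ hsgn)
  refine ⟨l₀, swap 0 1, hlen₀, hswap₀, hprod₀.trans hprod', top_unique ?_⟩
  rw [← closure_adjacentSwaps (m + 1)]
  exact Subgroup.closure_mono fun x hx ↦ hsub x (List.mem_append_right _ hx)
end
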